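/- Let A ∈ ℂ^{n×n} have circulant decomposition A = Σ_{k=0}^{n−1} R_k D^k, and let W be the unitary DFT matrix W(p,q) = (1/√n) e^{−2πipq/n}. Then for every k, R_k D^k = W^* ((W A W^*) ∘ C^k) W, where ∘ is the entrywise (Hadamard) product; that is, each circulant component of A is the inverse 2D Fourier transform of the corresponding cycle of the 2D Fourier transform W A W^* of A. -/

import Mathlib

/-!
The DFT matrix `W` intertwines the phase and the shift: `W D = C W` and `W C = D⁻¹ W`.
Hence `W R_k = diag(λ_k) W` with `λ_k(p) = Σ_j r_{j,k} ω^{-pj}` (`circCompEigenvalue`), and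
`W (R_k D^k) Wᴴ = diag(λ_k) C^k` is supported on the `k`-th cycle `{(q + k, q)}`.
On that cycle, reindexing the double sum for `(W A Wᴴ)(q + k, q)` along the diagonals
`s = t + j` of `A` gives exactly `λ_k(q + k)`, so `diag(λ_k) C^k = (W A Wᴴ) ∘ C^k`.
-/

open Matrix Finset

/-- `ω = exp(2πi/n)`. -/
noncomputable def omegaC (n : ℕ) : ℂ := Complex.exp (2 * Real.pi * Complex.I / n)

/-- The `n × n` cyclic-shift permutation matrix `C`, with `C(i,j) = 1` iff `i ≡ j + 1 (mod n)`. -/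
def cycMat (n : ℕ) : Matrix (Fin n) (Fin n) ℂ :=
  Matrix.of fun i j => if (i : ℕ) = ((j : ℕ) + 1) % n then 1 else 0

/-- The diagonal phase matrix `D` with `D(q,q) = ω^q`. -/
noncomputable def phaseMat (n : ℕ) : Matrix (Fin n) (Fin n) ℂ :=
  Matrix.diagonal fun q => omegaC n ^ (q : ℕ)

/-- The unitary DFT matrix `W(p,q) = (1/√n) e^{-2πipq/n}`. -/
noncomputable def dftMat (n : ℕ) : Matrix (Fin n) (Fin n) ℂ :=
  Matrix.of fun p q => (1 / (Real.sqrt n : ℂ)) * omegaC n ^ (-((p : ℕ) * (q : ℕ) : ℤ))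

/-- The coefficients `r_{j,k} = (1/n) Σ_l ω^{-kl} A((l+j) mod n, l)`. -/
noncomputable def circCoef {n : ℕ} (A : Matrix (Fin n) (Fin n) ℂ) (j k : Fin n) : ℂ :=
  (1 / (n : ℂ)) * ∑ l : Fin n, omegaC n ^ (-((k : ℕ) * (l : ℕ) : ℤ)) * A (l + j) l

/-- The `k`-th circulant component `R_k = Σ_j r_{j,k} C^j` of `A`. -/
noncomputable def circComp {n : ℕ} (A : Matrix (Fin n) (Fin n) ℂ) (k : Fin n) :
    Matrix (Fin n) (Fin n) ℂ :=
  ∑ j : Fin n, circCoef A j k • cycMat n ^ (j : ℕ)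

section

variable {n : ℕ}

lemma omegaC_isPrimitiveRoot [NeZero n] : IsPrimitiveRoot (omegaC n) n :=
  Complex.isPrimitiveRoot_exp n (NeZero.ne n)

lemma omegaC_ne_zero : omegaC n ≠ 0 := Complex.exp_ne_zero _

lemma omegaC_zpow_eq_zpow [NeZero n] {a b : ℤ} (h : a ≡ b [ZMOD n]) :
    omegaC n ^ a = omegaC n ^ b := by
  have hω : omegaC n ^ (b - a) = 1 := (omegaC_isPrimitiveRoot.zpow_eq_one_iff_dvd _).2 h.dvd
  rw [← mul_one (omegaC n ^ a), ← hω, ← zpow_add₀ omegaC_ne_zero, add_sub_cancel]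

lemma Fin.intCast_val_add_modEq [NeZero n] (a b : Fin n) :
    (((a + b : Fin n) : ℕ) : ℤ) ≡ (a : ℕ) + (b : ℕ) [ZMOD n] := by
  rw [Fin.val_add, Int.natCast_mod]
  push_cast
  exact Int.mod_modEq _ _

lemma Fin.intCast_val_sub_modEq [NeZero n] (a b : Fin n) :
    (((a - b : Fin n) : ℕ) : ℤ) ≡ (a : ℕ) - (b : ℕ) [ZMOD n] := by
  have h := Fin.intCast_val_add_modEq (a - b) b
  rw [sub_add_cancel] at h
  exact Int.ModEq.add_right_cancel' (b : ℕ) (by rw [sub_add_cancel]; exact h.symm)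

lemma Fin.intCast_val_one_modEq [NeZero n] : (((1 : Fin n) : ℕ) : ℤ) ≡ 1 [ZMOD n] := by
  rw [Fin.val_one', Int.natCast_mod, Nat.cast_one]
  exact Int.mod_modEq _ _

lemma star_omegaC_zpow (m : ℤ) : star (omegaC n ^ m) = omegaC n ^ (-m) := by
  rw [star_zpow₀, _root_.zpow_neg, ← _root_.inv_zpow]
  congr 1
  rw [omegaC, ← Complex.exp_neg, Complex.star_def, ← Complex.exp_conj]
  congr 1
  simp [Complex.conj_ofReal, div_eq_mul_inv, map_ofNat]

lemma cycMat_eq_toMatrix [NeZero n] :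
    cycMat n = (Equiv.subRight (1 : Fin n)).toPEquiv.toMatrix := by
  ext i j
  have : (i : ℕ) = ((j : ℕ) + 1) % n ↔ i - 1 = j := by
    rw [sub_eq_iff_eq_add, Fin.ext_iff, Fin.val_add, Fin.val_one', Nat.add_mod_mod]
  simp [cycMat, PEquiv.toMatrix_apply, this]

lemma cycMat_mul [NeZero n] (M : Matrix (Fin n) (Fin n) ℂ) :
    cycMat n * M = M.submatrix (· - 1) id := by
  rw [cycMat_eq_toMatrix, PEquiv.toMatrix_toPEquiv_mul]
  rfl

lemma mul_cycMat [NeZero n] (M : Matrix (Fin n) (Fin n) ℂ) :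
    M * cycMat n = M.submatrix id (· + 1) := by
  rw [cycMat_eq_toMatrix, PEquiv.mul_toMatrix_toPEquiv]
  rfl

open Fin.NatCast in
lemma cycMat_pow_mul [NeZero n] (m : ℕ) (M : Matrix (Fin n) (Fin n) ℂ) :
    cycMat n ^ m * M = M.submatrix (· - (m : Fin n)) id := by
  induction m with
  | zero => ext; simp
  | succ m ih =>
    rw [pow_succ', Matrix.mul_assoc, ih, cycMat_mul]
    ext i j
    simp [sub_sub, add_comm]

lemma cycMat_pow_apply [NeZero n] (k i j : Fin n) :
    (cycMat n ^ (k : ℕ)) i j = if i = j + k then 1 else 0 := by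
  rw [← Matrix.mul_one (cycMat n ^ (k : ℕ)), cycMat_pow_mul, Fin.cast_val_eq_self]
  simp [Matrix.one_apply, sub_eq_iff_eq_add]

lemma sum_omegaC_zpow_mul_sub [NeZero n] (a b : Fin n) :
    ∑ s : Fin n, omegaC n ^ ((s : ℕ) * ((a : ℕ) - (b : ℕ)) : ℤ) =
      if a = b then (n : ℂ) else 0 := by
  set z := omegaC n ^ ((a : ℕ) - (b : ℕ) : ℤ) with hz_def
  have hpow (s : Fin n) :
      omegaC n ^ ((s : ℕ) * ((a : ℕ) - (b : ℕ)) : ℤ) = z ^ (s : ℕ) := by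
    rw [mul_comm, _root_.zpow_mul, zpow_natCast]
  simp only [hpow, Fin.sum_univ_eq_sum_range (z ^ ·)]
  split_ifs with hab
  · simp [z, hab]
  · have hz : z ≠ 1 := by
      rw [hz_def, Ne, zpow_sub₀ omegaC_ne_zero,
        div_eq_one_iff_eq (zpow_ne_zero _ omegaC_ne_zero), zpow_natCast, zpow_natCast]
      exact fun h => hab (Fin.ext (omegaC_isPrimitiveRoot.pow_inj a.isLt b.isLt h))
    have hzn : z ^ n = 1 := by
      rw [← zpow_natCast, ← _root_.zpow_mul, mul_comm, _root_.zpow_mul, zpow_natCast,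
        omegaC_isPrimitiveRoot.pow_eq_one, _root_.one_zpow]
    rw [geom_sum_eq hz, hzn, sub_self, zero_div]

lemma dftMat_apply (p q : Fin n) :
    dftMat n p q = (1 / (Real.sqrt n : ℂ)) * omegaC n ^ (-((p : ℕ) * (q : ℕ) : ℤ)) :=
  rfl

lemma conjTranspose_dftMat_apply (p q : Fin n) :
    (dftMat n)ᴴ p q = (1 / (Real.sqrt n : ℂ)) * omegaC n ^ ((p : ℕ) * (q : ℕ) : ℤ) := by
  rw [conjTranspose_apply, dftMat_apply, star_mul', star_omegaC_zpow, neg_neg,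
    mul_comm ((q : ℕ) : ℤ)]
  simp [Complex.conj_ofReal]

lemma one_div_sqrt_mul_self (n : ℕ) :
    (1 / (Real.sqrt n : ℂ)) * (1 / (Real.sqrt n : ℂ)) = 1 / n := by
  rw [div_mul_div_comm, one_mul, ← Complex.ofReal_mul, Real.mul_self_sqrt n.cast_nonneg,
    Complex.ofReal_natCast]

lemma conjTranspose_dftMat_mul_dftMat [NeZero n] : (dftMat n)ᴴ * dftMat n = 1 := by
  ext p q
  have hterm (s : Fin n) : (dftMat n)ᴴ p s * dftMat n s q =
      1 / n * omegaC n ^ ((s : ℕ) * ((p : ℕ) - (q : ℕ)) : ℤ) := by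
    rw [conjTranspose_dftMat_apply, dftMat_apply, mul_mul_mul_comm, one_div_sqrt_mul_self,
      ← zpow_add₀ omegaC_ne_zero]
    congr 2
    ring
  rw [mul_apply, Finset.sum_congr rfl fun s _ => hterm s, ← Finset.mul_sum,
    sum_omegaC_zpow_mul_sub, one_apply]
  split_ifs <;> simp [NeZero.ne n]

lemma dftMat_mul_phaseMat [NeZero n] : dftMat n * phaseMat n = cycMat n * dftMat n := by
  ext p q
  rw [phaseMat, mul_diagonal, cycMat_mul, submatrix_apply, id, dftMat_apply, dftMat_apply,
    mul_assoc, ← zpow_natCast, ← zpow_add₀ omegaC_ne_zero]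
  congr 1
  apply omegaC_zpow_eq_zpow
  have hp := (Fin.intCast_val_sub_modEq p 1).trans
    ((Int.ModEq.refl _).sub Fin.intCast_val_one_modEq)
  calc -((p : ℕ) * (q : ℕ) : ℤ) + (q : ℕ) = -(((p : ℕ) - 1) * (q : ℕ) : ℤ) := by ring
    _ ≡ _ [ZMOD n] := by gcongr

lemma dftMat_mul_cycMat [NeZero n] :
    dftMat n * cycMat n =
      diagonal (fun p : Fin n => omegaC n ^ (-((p : ℕ) : ℤ))) * dftMat n := by
  ext p q
  rw [mul_cycMat, submatrix_apply, id, diagonal_mul, dftMat_apply, dftMat_apply, mul_left_comm,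
    ← zpow_add₀ omegaC_ne_zero]
  congr 1
  apply omegaC_zpow_eq_zpow
  have hq := (Fin.intCast_val_add_modEq q 1).trans
    ((Int.ModEq.refl _).add Fin.intCast_val_one_modEq)
  calc -((p : ℕ) * ((q + 1 : Fin n) : ℕ) : ℤ)
        ≡ -((p : ℕ) * ((q : ℕ) + 1) : ℤ) [ZMOD n] := by gcongr
    _ = _ := by ring

noncomputable def circCompEigenvalue (A : Matrix (Fin n) (Fin n) ℂ) (k p : Fin n) : ℂ :=
  ∑ j : Fin n, circCoef A j k * omegaC n ^ (-((p : ℕ) * (j : ℕ) : ℤ))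

lemma dftMat_mul_circComp [NeZero n] (A : Matrix (Fin n) (Fin n) ℂ) (k : Fin n) :
    dftMat n * circComp A k = diagonal (circCompEigenvalue A k) * dftMat n := by
  have hpow (j : ℕ) := SemiconjBy.pow_right (dftMat_mul_cycMat (n := n)) j
  simp only [circComp, Finset.mul_sum, Matrix.mul_smul, SemiconjBy.eq (hpow _), diagonal_pow,
    ← Matrix.smul_mul, ← Finset.sum_mul]
  congr 1
  ext p q
  simp only [circCompEigenvalue, Matrix.sum_apply, Matrix.smul_apply, diagonal_apply]
  split_ifs with hpq
  · simp [← zpow_natCast, ← _root_.zpow_mul]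
  · simp

lemma dftMat_mul_circComp_mul_phaseMat_pow [NeZero n] (A : Matrix (Fin n) (Fin n) ℂ) (k : Fin n) :
    dftMat n * (circComp A k * phaseMat n ^ (k : ℕ)) =
      diagonal (circCompEigenvalue A k) * cycMat n ^ (k : ℕ) * dftMat n := by
  rw [← Matrix.mul_assoc, dftMat_mul_circComp, Matrix.mul_assoc, Matrix.mul_assoc,
    (SemiconjBy.pow_right dftMat_mul_phaseMat (k : ℕ)).eq]

lemma dftMat_apply_add_mul_conjTranspose_apply [NeZero n] (k q t j : Fin n) :
    dftMat n (q + k) (t + j) * (dftMat n)ᴴ t q =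
      1 / n * omegaC n ^ (-((k : ℕ) * (t : ℕ) : ℤ)) *
        omegaC n ^ (-(((q + k : Fin n) : ℕ) * (j : ℕ) : ℤ)) := by
  have hp := Fin.intCast_val_add_modEq q k
  have ht := Fin.intCast_val_add_modEq t j
  have hexp : -(((q + k : Fin n) : ℕ) * ((t + j : Fin n) : ℕ) : ℤ) + (t : ℕ) * (q : ℕ) ≡
      -((k : ℕ) * (t : ℕ) : ℤ) + -(((q + k : Fin n) : ℕ) * (j : ℕ) : ℤ) [ZMOD n] :=
    calc -(((q + k : Fin n) : ℕ) * ((t + j : Fin n) : ℕ) : ℤ) + (t : ℕ) * (q : ℕ)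
        ≡ -((((q : ℕ) + (k : ℕ)) * ((t : ℕ) + (j : ℕ)) : ℤ)) + (t : ℕ) * (q : ℕ)
          [ZMOD n] := by gcongr
      _ = -((k : ℕ) * (t : ℕ) : ℤ) + -((((q : ℕ) + (k : ℕ)) * (j : ℕ) : ℤ)) := by ring
      _ ≡ _ [ZMOD n] := by gcongr
  rw [dftMat_apply, conjTranspose_dftMat_apply, mul_mul_mul_comm, one_div_sqrt_mul_self,
    ← zpow_add₀ omegaC_ne_zero, omegaC_zpow_eq_zpow hexp, zpow_add₀ omegaC_ne_zero, mul_assoc]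

lemma dftMat_mul_mul_conjTranspose_apply_add [NeZero n] (A : Matrix (Fin n) (Fin n) ℂ)
    (k q : Fin n) :
    (dftMat n * A * (dftMat n)ᴴ) (q + k) q = circCompEigenvalue A k (q + k) := by
  calc (dftMat n * A * (dftMat n)ᴴ) (q + k) q
      = ∑ t : Fin n, ∑ j : Fin n,
          dftMat n (q + k) (t + j) * (dftMat n)ᴴ t q * A (t + j) t := by
        simp only [mul_apply, Finset.sum_mul, mul_right_comm _ (A _ _)]
        exact Finset.sum_congr rfl fun t _ => (Equiv.sum_comp (Equiv.addLeft t) _).symm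
    _ = circCompEigenvalue A k (q + k) := by
        simp only [dftMat_apply_add_mul_conjTranspose_apply, circCompEigenvalue, circCoef,
          Finset.mul_sum, Finset.sum_mul]
        rw [Finset.sum_comm]
        exact Finset.sum_congr rfl fun j _ => Finset.sum_congr rfl fun t _ => by ring

lemma hadamard_cycMat_pow_eq_diagonal_mul [NeZero n] {M : Matrix (Fin n) (Fin n) ℂ}
    {d : Fin n → ℂ} (k : Fin n) (h : ∀ q, M (q + k) q = d (q + k)) :
    M ⊙ (cycMat n ^ (k : ℕ)) = diagonal d * cycMat n ^ (k : ℕ) := by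
  ext p q
  rw [hadamard_apply, diagonal_mul, cycMat_pow_apply]
  split_ifs with hpq
  · rw [hpq, h]
  · simp

end

/-- Each circulant component `R_k D^k` of `A` is the inverse 2D Fourier transform of the
corresponding cycle of the 2D Fourier transform `W A W^*` of `A`:
`R_k D^k = W^* ((W A W^*) ∘ C^k) W`. -/
theorem circComp_eq_inverse_fourier_of_cycle (n : ℕ) (hn : 0 < n)
    (A : Matrix (Fin n) (Fin n) ℂ) (k : Fin n) :
    circComp A k * phaseMat n ^ (k : ℕ) =
      (dftMat n)ᴴ *
        Matrix.hadamard (dftMat n * A * (dftMat n)ᴴ) (cycMat n ^ (k : ℕ)) *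
        dftMat n := by
  have : NeZero n := ⟨hn.ne'⟩
  rw [hadamard_cycMat_pow_eq_diagonal_mul k (dftMat_mul_mul_conjTranspose_apply_add A k),
    Matrix.mul_assoc, ← dftMat_mul_circComp_mul_phaseMat_pow, ← Matrix.mul_assoc,
    conjTranspose_dftMat_mul_dftMat, Matrix.one_mul]
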